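/- Let A, B, C and A', B', C' be two triangles in EuclideanSpace ℝ (Fin 2) that are isosceles with apex B, i.e. dist A B = dist C B and dist A' B' = dist C' B', and suppose their bisector lengths from the apex are equal: t_B = t_{B'} > 0. If the apex angles satisfy ∠ A B C < ∠ A' B' C' ≤ π/3, then t_A < t_{A'}. (In isosceles triangles with a fixed bisector length from the apex B, the bisector length from a base vertex is a strictly increasing function of the apex angle on (0, π/3].) -/

import Mathlib

open EuclideanGeometry Real

/-- The length of the internal angle bisector from vertex `A` in triangle `A B C`:
the distance from `A` to the point on `BC` dividing it in ratio `AB : AC`. -/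
noncomputable def bisectorLength (A B C : EuclideanSpace ℝ (Fin 2)) : ℝ :=
  dist A (((dist C A) / (dist C A + dist A B)) • B + ((dist A B) / (dist C A + dist A B)) • C)

/-!
Put `u = sin (θ / 2)` for an isosceles triangle with legs `s` and apex angle `θ`. The base is
`2 s u`, so the bisector-length formula `t² = b c (1 - (a / (b + c))²)`, itself Stewart's
theorem, gives `t_B² = s² (1 - u²)` and `t_A² = 8 s² u² (1 + u) / (1 + 2 u)²`. Hence
`(t_A / t_B)² = 8 u² / ((1 - u) (1 + 2 u)²)`, which is strictly increasing on `[0, 1)`, while `u`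
increases with `θ ∈ [0, π)`.
-/

theorem dist_smul_add_smul_sq {V : Type*} [NormedAddCommGroup V] [InnerProductSpace ℝ V]
    (a b c : V) {s t : ℝ} (hst : s + t = 1) :
    dist a (s • b + t • c) ^ 2 =
      s * dist a b ^ 2 + t * dist a c ^ 2 - s * t * dist b c ^ 2 := by
  have hsplit : a - (s • b + t • c) = s • (a - b) + t • (a - c) := by
    linear_combination (norm := module) -hst • a
  have hpar := norm_sub_sq_real (a - b) (a - c)
  rw [sub_sub_sub_cancel_left] at hpar
  rw [dist_eq_norm, hsplit, norm_add_sq_real, norm_smul, norm_smul, real_inner_smul_left,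
    real_inner_smul_right, dist_eq_norm, dist_eq_norm, dist_comm, dist_eq_norm,
    Real.norm_eq_abs, Real.norm_eq_abs, mul_pow, mul_pow, sq_abs, sq_abs]
  linear_combination (s * t) * hpar + (‖a - b‖ ^ 2 * s + ‖a - c‖ ^ 2 * t) * hst

theorem bisectorLength_sq {A B C : EuclideanSpace ℝ (Fin 2)} (hAB : A ≠ B) :
    bisectorLength A B C ^ 2 =
      dist A B * dist A C * (1 - (dist B C / (dist A B + dist A C)) ^ 2) := by
  have hsum : dist A C + dist A B ≠ 0 := by
    have := dist_pos.2 hAB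
    positivity
  rw [bisectorLength, dist_comm C A, add_comm (dist A B),
    dist_smul_add_smul_sq _ _ _ (by field_simp)]
  field_simp
  ring

section HalfAngle

variable {V P : Type*} [NormedAddCommGroup V] [InnerProductSpace ℝ V] [MetricSpace P]
  [NormedAddTorsor V P]

theorem sin_half_angle_nonneg (A B C : P) : 0 ≤ sin (∠ A B C / 2) :=
  sin_nonneg_of_nonneg_of_le_pi (by linarith [angle_nonneg A B C])
    (by linarith [angle_le_pi A B C, pi_pos])

theorem sin_half_angle_lt_one {A B C : P} (h : ∠ A B C < π) :
    sin (∠ A B C / 2) < 1 :=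
  (sin_lt_sin_of_lt_of_le_pi_div_two (by linarith [angle_nonneg A B C]) le_rfl
    (by linarith)).trans_eq sin_pi_div_two

theorem dist_eq_two_mul_dist_mul_sin_half_angle {A B C : P}
    (hiso : dist A B = dist C B) : dist A C = 2 * dist A B * sin (∠ A B C / 2) := by
  have hsin := sin_half_angle_nonneg A B C
  have hcos := law_cos A B C
  have hhalf := sin_sq_eq_half_sub (∠ A B C / 2)
  rw [mul_div_cancel₀ _ two_ne_zero] at hhalf
  rw [← hiso] at hcos
  refine (pow_left_inj₀ dist_nonneg (by positivity) two_ne_zero).1 ?_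
  linear_combination hcos - 4 * dist A B ^ 2 * hhalf

end HalfAngle

/-- `(t_A / t_B) ^ 2` in an isosceles triangle with apex `B`, as a function of
`sin (∠ A B C / 2)`. -/
noncomputable def isoscelesBisectorRatio (u : ℝ) : ℝ := 8 * u ^ 2 / ((1 - u) * (1 + 2 * u) ^ 2)

theorem isoscelesBisectorRatio_strictMonoOn :
    StrictMonoOn isoscelesBisectorRatio (Set.Ico 0 1) := by
  rintro u ⟨hu0, hu1⟩ v ⟨-, hv1⟩ huv
  have hu1' : 0 < 1 - u := sub_pos.2 hu1
  have hv1' : 0 < 1 - v := sub_pos.2 hv1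
  have hvpos : 0 < v := hu0.trans_lt huv
  have hdiff : v ^ 2 * ((1 - u) * (1 + 2 * u) ^ 2) - u ^ 2 * ((1 - v) * (1 + 2 * v) ^ 2) =
      (v - u) * (u + v + 3 * u * v + 4 * u ^ 2 * v ^ 2) := by ring
  have hpos : 0 < (v - u) * (u + v + 3 * u * v + 4 * u ^ 2 * v ^ 2) :=
    mul_pos (sub_pos.2 huv) (by positivity)
  unfold isoscelesBisectorRatio
  rw [div_lt_div_iff₀ (by positivity) (by positivity)]
  linarith

section Isosceles

variable {A B C : EuclideanSpace ℝ (Fin 2)}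

theorem bisectorLength_apex_sq (hiso : dist A B = dist C B) (hAB : A ≠ B) :
    bisectorLength B C A ^ 2 = dist A B ^ 2 * (1 - sin (∠ A B C / 2) ^ 2) := by
  have hs : dist A B ≠ 0 := dist_ne_zero.2 hAB
  have hBC : B ≠ C := by
    rw [← dist_ne_zero, dist_comm, ← hiso]
    exact hs
  rw [bisectorLength_sq hBC, dist_comm C A, dist_eq_two_mul_dist_mul_sin_half_angle hiso,
    dist_comm B C, dist_comm B A, ← hiso]
  field_simp
  ring

theorem bisectorLength_apex_sq_pos (hiso : dist A B = dist C B) (hAB : A ≠ B)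
    (hθ : ∠ A B C < π) : 0 < bisectorLength B C A ^ 2 := by
  have hs := dist_pos.2 hAB
  have hu0 := sin_half_angle_nonneg A B C
  have hu1 := sin_half_angle_lt_one hθ
  rw [bisectorLength_apex_sq hiso hAB]
  exact mul_pos (by positivity) (by nlinarith)

theorem bisectorLength_base_sq (hiso : dist A B = dist C B) (hAB : A ≠ B) :
    bisectorLength A B C ^ 2 =
      8 * dist A B ^ 2 * sin (∠ A B C / 2) ^ 2 * (1 + sin (∠ A B C / 2)) /
        (1 + 2 * sin (∠ A B C / 2)) ^ 2 := by
  have hs : dist A B ≠ 0 := dist_ne_zero.2 hAB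
  have hu := sin_half_angle_nonneg A B C
  rw [bisectorLength_sq hAB, dist_eq_two_mul_dist_mul_sin_half_angle hiso, dist_comm B C, ← hiso]
  field_simp
  ring

theorem bisectorLength_base_sq_eq_isoscelesBisectorRatio_mul (hiso : dist A B = dist C B)
    (hAB : A ≠ B) (hθ : ∠ A B C < π) :
    bisectorLength A B C ^ 2 =
      isoscelesBisectorRatio (sin (∠ A B C / 2)) * bisectorLength B C A ^ 2 := by
  have hu := sin_half_angle_nonneg A B C
  have hu1 : 1 - sin (∠ A B C / 2) ≠ 0 := (sub_pos.2 (sin_half_angle_lt_one hθ)).ne'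
  rw [bisectorLength_base_sq hiso hAB, bisectorLength_apex_sq hiso hAB, isoscelesBisectorRatio]
  field_simp
  ring

end Isosceles

theorem isosceles_base_bisector_strictMono_general (A B C A' B' C' : EuclideanSpace ℝ (Fin 2))
    (h : ¬ Collinear ℝ ({A, B, C} : Set (EuclideanSpace ℝ (Fin 2))))
    (h' : ¬ Collinear ℝ ({A', B', C'} : Set (EuclideanSpace ℝ (Fin 2))))
    (hiso : dist A B = dist C B) (hiso' : dist A' B' = dist C' B')
    (htB : bisectorLength B C A = bisectorLength B' C' A')
    (hang : ∠ A B C < ∠ A' B' C') :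
    bisectorLength A B C < bisectorLength A' B' C' := by
  have hθ := angle_lt_pi_of_not_collinear h
  have hθ' := angle_lt_pi_of_not_collinear h'
  have hsin : sin (∠ A B C / 2) < sin (∠ A' B' C' / 2) :=
    sin_lt_sin_of_lt_of_le_pi_div_two (by linarith [angle_nonneg A B C]) (by linarith)
      (by linarith)
  have hratio := isoscelesBisectorRatio_strictMonoOn
    ⟨sin_half_angle_nonneg A B C, sin_half_angle_lt_one hθ⟩
    ⟨sin_half_angle_nonneg A' B' C', sin_half_angle_lt_one hθ'⟩ hsin
  have hAB := ne₁₂_of_not_collinear h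
  refine lt_of_pow_lt_pow_left₀ 2 dist_nonneg ?_
  rw [bisectorLength_base_sq_eq_isoscelesBisectorRatio_mul hiso hAB hθ,
    bisectorLength_base_sq_eq_isoscelesBisectorRatio_mul hiso' (ne₁₂_of_not_collinear h') hθ',
    ← htB]
  exact mul_lt_mul_of_pos_right hratio (bisectorLength_apex_sq_pos hiso hAB hθ)

theorem isosceles_base_bisector_strictMono (A B C A' B' C' : EuclideanSpace ℝ (Fin 2))
    (h : ¬ Collinear ℝ ({A, B, C} : Set (EuclideanSpace ℝ (Fin 2))))
    (h' : ¬ Collinear ℝ ({A', B', C'} : Set (EuclideanSpace ℝ (Fin 2))))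
    (hiso : dist A B = dist C B) (hiso' : dist A' B' = dist C' B')
    (htB : bisectorLength B C A = bisectorLength B' C' A')
    (htBpos : 0 < bisectorLength B C A)
    (hang : ∠ A B C < ∠ A' B' C') (hang' : ∠ A' B' C' ≤ π / 3) :
    bisectorLength A B C < bisectorLength A' B' C' :=
  isosceles_base_bisector_strictMono_general A B C A' B' C' h h' hiso hiso' htB hang
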